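/- Let ρ ∈ Density(X⊗Y), let R_1,R_2,S_1,S_2 be reflections on X with S_1 and S_2 commuting, and let U_1, U_2 be reflections on Y. If R_1 and S_1 are each ε-consistent with U_1 on ρ, and R_2 and S_2 are each ε-consistent with U_2 on ρ, then Re Tr(R_1 R_2 R_1 R_2 ρ) ≥ 1 − O(ε). -/

import Mathlib

/-!
A positive semidefinite `ρ` turns `‖A‖² = Re Tr(Aᴴ A ρ)` into a seminorm on matrices
(`Matrix.toMatrixSeminormedAddCommGroup`), invariant under left multiplication by unitaries.
For unitaries `U, V` one has `‖U - V‖² = 2 - 2 Re Tr(Uᴴ V ρ)`, so ε-consistency of `R` with `U`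
says `‖R ⊗ 1 - 1 ⊗ U‖ ≤ 2√ε`: against `ρ`, each of `R₁, S₁` may be traded for `U₁` and each of
`R₂, S₂` for `U₂`. Eight such trades lead from `R₁R₂` to `U₂U₁`, to `S₁S₂ = S₂S₁`, to `U₁U₂` and
finally to `R₂R₁`, so `‖R₁R₂ - R₂R₁‖ ≤ 16√ε`; and `‖R₁R₂ - R₂R₁‖² = 2 - 2 Re Tr(R₁R₂R₁R₂ρ)`.
-/

open Matrix Kronecker ComplexOrder

/-- Two reflections `R` on `X` and `U` on `Y` are ε-consistent on a state `ρ` of `X⊗Y`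
if `(1 + Tr((R⊗U)ρ))/2 ≥ 1 − ε`. -/
def EpsConsistent {nx ny : ℕ} (ρ : Matrix (Fin nx × Fin ny) (Fin nx × Fin ny) ℂ)
    (R : Matrix (Fin nx) (Fin nx) ℂ) (U : Matrix (Fin ny) (Fin ny) ℂ) (ε : ℝ) : Prop :=
  1 - ε ≤ (1 + (((R ⊗ₖ U) * ρ).trace).re) / 2

theorem Commute.kronecker {n m α : Type*} [Fintype n] [Fintype m] [CommSemiring α]
    {A A' : Matrix n n α} {B B' : Matrix m m α} (hA : Commute A A') (hB : Commute B B') :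
    Commute (A ⊗ₖ B) (A' ⊗ₖ B') := by
  rw [Commute, SemiconjBy, ← mul_kronecker_mul, ← mul_kronecker_mul, hA.eq, hB.eq]

namespace Matrix

section Reflection

variable {n m α : Type*} [Fintype n] [DecidableEq n] [Fintype m] [DecidableEq m]
  [CommSemiring α] [StarRing α]

def IsReflection (A : Matrix n n α) : Prop := A.IsHermitian ∧ A * A = 1

lemma isReflection_one : (1 : Matrix n n α).IsReflection :=
  ⟨isHermitian_one, one_mul 1⟩

lemma IsReflection.mem_unitary {A : Matrix n n α} (hA : A.IsReflection) :
    A ∈ unitary (Matrix n n α) := by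
  rw [Unitary.mem_iff, star_eq_conjTranspose, hA.1.eq]
  exact ⟨hA.2, hA.2⟩

lemma IsReflection.kronecker {A : Matrix n n α} {B : Matrix m m α} (hA : A.IsReflection)
    (hB : B.IsReflection) : (A ⊗ₖ B).IsReflection :=
  ⟨by rw [IsHermitian, conjTranspose_kronecker, hA.1.eq, hB.1.eq],
    by rw [← mul_kronecker_mul, hA.2, hB.2, one_kronecker_one]⟩

end Reflection

section StateNorm

variable {𝕜 n : Type*} [RCLike 𝕜] [Fintype n] {ρ : Matrix n n 𝕜}

lemma re_trace_conjTranspose_mul (hρ : ρ.IsHermitian) (A : Matrix n n 𝕜) :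
    RCLike.re (Aᴴ * ρ).trace = RCLike.re (A * ρ).trace := by
  rw [← hρ.eq, ← conjTranspose_mul, trace_conjTranspose, hρ.eq, trace_mul_comm]
  exact RCLike.conj_re _

lemma norm_sq_eq_re_trace (hρ : ρ.PosSemidef) (A : Matrix n n 𝕜) :
    letI := ρ.toMatrixSeminormedAddCommGroup hρ
    ‖A‖ ^ 2 = RCLike.re (Aᴴ * A * ρ).trace := by
  let := ρ.toMatrixSeminormedAddCommGroup hρ
  let := ρ.toMatrixInnerProductSpace hρ
  rw [@norm_sq_eq_re_inner 𝕜, mul_assoc, trace_mul_comm]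
  rfl

variable [DecidableEq n]

lemma norm_unitary_mul (hρ : ρ.PosSemidef) {W : Matrix n n 𝕜} (hW : W ∈ unitary (Matrix n n 𝕜))
    (A : Matrix n n 𝕜) :
    letI := ρ.toMatrixSeminormedAddCommGroup hρ
    ‖W * A‖ = ‖A‖ := by
  let := ρ.toMatrixSeminormedAddCommGroup hρ
  have hW' : Wᴴ * W = 1 := Unitary.star_mul_self_of_mem hW
  refine (pow_left_inj₀ (norm_nonneg _) (norm_nonneg _) two_ne_zero).mp ?_
  rw [norm_sq_eq_re_trace, norm_sq_eq_re_trace, conjTranspose_mul, mul_assoc Aᴴ,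
    ← mul_assoc Wᴴ, hW', one_mul]

lemma norm_sub_sq_of_mem_unitary (hρ : ρ.PosSemidef) (htr : ρ.trace = 1) {U V : Matrix n n 𝕜}
    (hU : U ∈ unitary (Matrix n n 𝕜)) (hV : V ∈ unitary (Matrix n n 𝕜)) :
    letI := ρ.toMatrixSeminormedAddCommGroup hρ
    ‖U - V‖ ^ 2 = 2 - 2 * RCLike.re (Uᴴ * V * ρ).trace := by
  have hU' : Uᴴ * U = 1 := Unitary.star_mul_self_of_mem hU
  have hV' : Vᴴ * V = 1 := Unitary.star_mul_self_of_mem hV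
  have hexpand : (U - V)ᴴ * (U - V) * ρ = ρ - (Uᴴ * V)ᴴ * ρ - Uᴴ * V * ρ + ρ := by
    simp only [conjTranspose_sub, conjTranspose_mul, conjTranspose_conjTranspose, sub_mul,
      mul_sub, hU', hV', one_mul]
    abel
  rw [norm_sq_eq_re_trace, hexpand, trace_add, trace_sub, trace_sub, map_add, map_sub, map_sub,
    re_trace_conjTranspose_mul hρ.isHermitian, htr, RCLike.one_re]
  ring

lemma norm_mul_sub_mul_le (hρ : ρ.PosSemidef) {x y x' y' : Matrix n n 𝕜}
    (hx : x ∈ unitary (Matrix n n 𝕜)) (hy' : y' ∈ unitary (Matrix n n 𝕜)) (h : Commute x y') :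
    letI := ρ.toMatrixSeminormedAddCommGroup hρ
    ‖x * y - y' * x'‖ ≤ ‖y - y'‖ + ‖x - x'‖ := by
  let := ρ.toMatrixSeminormedAddCommGroup hρ
  calc ‖x * y - y' * x'‖ = ‖x * (y - y') + y' * (x - x')‖ := by
        rw [mul_sub, mul_sub, h.eq]; abel_nf
    _ ≤ ‖x * (y - y')‖ + ‖y' * (x - x')‖ := norm_add_le _ _
    _ = ‖y - y'‖ + ‖x - x'‖ := by rw [norm_unitary_mul hρ hx, norm_unitary_mul hρ hy']

lemma norm_commutator_le (hρ : ρ.PosSemidef) {a b a' b' u v : Matrix n n 𝕜}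
    (ha : a ∈ unitary (Matrix n n 𝕜)) (hb : b ∈ unitary (Matrix n n 𝕜))
    (ha' : a' ∈ unitary (Matrix n n 𝕜)) (hb' : b' ∈ unitary (Matrix n n 𝕜))
    (hu : u ∈ unitary (Matrix n n 𝕜)) (hv : v ∈ unitary (Matrix n n 𝕜))
    (hav : Commute a v) (hva' : Commute v a') (hb'u : Commute b' u) (hub : Commute u b)
    (ha'b' : Commute a' b') {δ : ℝ} :
    letI := ρ.toMatrixSeminormedAddCommGroup hρ
    ‖a - u‖ ≤ δ → ‖a' - u‖ ≤ δ → ‖b - v‖ ≤ δ → ‖b' - v‖ ≤ δ → ‖a * b - b * a‖ ≤ 8 * δ := by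
  let := ρ.toMatrixSeminormedAddCommGroup hρ
  intro hau ha'u hbv hb'v
  have h1 := norm_mul_sub_mul_le hρ (y := b) (x' := u) ha hv hav
  have h2 := norm_mul_sub_mul_le hρ (y := u) (x' := b') hv ha' hva'
  have h3 := norm_mul_sub_mul_le hρ (y := a') (x' := v) hb' hu hb'u
  have h4 := norm_mul_sub_mul_le hρ (y := v) (x' := a) hu hb hub
  calc ‖a * b - b * a‖
      ≤ ‖a * b - v * u‖ + ‖v * u - a' * b'‖ + ‖b' * a' - u * v‖ + ‖u * v - b * a‖ := by
        rw [← ha'b'.eq]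
        linarith [norm_sub_le_norm_sub_add_norm_sub (a * b) (v * u) (b * a),
          norm_sub_le_norm_sub_add_norm_sub (v * u) (a' * b') (b * a),
          norm_sub_le_norm_sub_add_norm_sub (a' * b') (u * v) (b * a)]
    _ ≤ 8 * δ := by
        linarith [norm_sub_rev u a', norm_sub_rev v b', norm_sub_rev v b, norm_sub_rev u a]

lemma norm_commutator_sq_of_isReflection (hρ : ρ.PosSemidef) (htr : ρ.trace = 1)
    {a b : Matrix n n 𝕜} (ha : a.IsReflection) (hb : b.IsReflection) :
    letI := ρ.toMatrixSeminormedAddCommGroup hρ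
    ‖a * b - b * a‖ ^ 2 = 2 - 2 * RCLike.re (a * b * a * b * ρ).trace := by
  let := ρ.toMatrixSeminormedAddCommGroup hρ
  rw [norm_sub_rev, norm_sub_sq_of_mem_unitary hρ htr
    (mul_mem hb.mem_unitary ha.mem_unitary) (mul_mem ha.mem_unitary hb.mem_unitary),
    conjTranspose_mul, ha.1.eq, hb.1.eq, ← mul_assoc (a * b)]

end StateNorm

end Matrix

lemma EpsConsistent.norm_sub_le {nx ny : ℕ} {ρ : Matrix (Fin nx × Fin ny) (Fin nx × Fin ny) ℂ}
    (hρ : ρ.PosSemidef) (htr : ρ.trace = 1) {R : Matrix (Fin nx) (Fin nx) ℂ}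
    {U : Matrix (Fin ny) (Fin ny) ℂ} {ε : ℝ} (hR : R.IsReflection) (hU : U.IsReflection)
    (h : EpsConsistent ρ R U ε) :
    letI := ρ.toMatrixSeminormedAddCommGroup hρ
    ‖R ⊗ₖ 1 - 1 ⊗ₖ U‖ ≤ 2 * √ε := by
  let := ρ.toMatrixSeminormedAddCommGroup hρ
  have hsq : ‖R ⊗ₖ 1 - 1 ⊗ₖ U‖ ^ 2 = 2 - 2 * ((R ⊗ₖ U) * ρ).trace.re := by
    rw [norm_sub_sq_of_mem_unitary hρ htr (hR.kronecker isReflection_one).mem_unitary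
      (isReflection_one.kronecker hU).mem_unitary, (hR.kronecker isReflection_one).1.eq,
      ← mul_kronecker_mul, mul_one, one_mul, RCLike.re_to_complex]
  have hle : ‖R ⊗ₖ 1 - 1 ⊗ₖ U‖ ^ 2 ≤ 4 * ε := by
    unfold EpsConsistent at h
    linarith
  have hε : 0 ≤ ε := by nlinarith [sq_nonneg ‖R ⊗ₖ 1 - 1 ⊗ₖ U‖]
  refine (pow_le_pow_iff_left₀ (norm_nonneg _) (by positivity) two_ne_zero).mp ?_
  rwa [mul_pow, Real.sq_sqrt hε, show (2 : ℝ) ^ 2 = 4 by norm_num]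

/-- If `S₁, S₂` commute, `R₁, S₁` are both ε-consistent with `U₁`, and `R₂, S₂` are
both ε-consistent with `U₂`, then `R₁` and `R₂` approximately commute on `ρ`:
`Re Tr(R₁R₂R₁R₂ρ) ≥ 1 − O(ε)`. -/
theorem approximate_commutation :
    ∃ C : ℝ, 0 < C ∧
      ∀ (nx ny : ℕ) (ρ : Matrix (Fin nx × Fin ny) (Fin nx × Fin ny) ℂ)
        (R1 R2 S1 S2 : Matrix (Fin nx) (Fin nx) ℂ)
        (U1 U2 : Matrix (Fin ny) (Fin ny) ℂ) (ε : ℝ),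
        ρ.PosSemidef → ρ.trace = 1 → 0 ≤ ε →
        (∀ A ∈ [R1, R2, S1, S2], A.IsHermitian ∧ A * A = (1 : Matrix (Fin nx) (Fin nx) ℂ)) →
        (∀ A ∈ [U1, U2], A.IsHermitian ∧ A * A = (1 : Matrix (Fin ny) (Fin ny) ℂ)) →
        S1 * S2 = S2 * S1 →
        EpsConsistent ρ R1 U1 ε → EpsConsistent ρ S1 U1 ε →
        EpsConsistent ρ R2 U2 ε → EpsConsistent ρ S2 U2 ε →
        1 - C * ε ≤
          ((((R1 * R2 * R1 * R2) ⊗ₖ (1 : Matrix (Fin ny) (Fin ny) ℂ)) * ρ).trace).re := by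
  refine ⟨128, by norm_num, ?_⟩
  intro nx ny ρ R1 R2 S1 S2 U1 U2 ε hρ htr hε hX hY hS hR1U1 hS1U1 hR2U2 hS2U2
  let := ρ.toMatrixSeminormedAddCommGroup hρ
  have hR1 : R1.IsReflection := hX R1 (by simp)
  have hR2 : R2.IsReflection := hX R2 (by simp)
  have hS1 : S1.IsReflection := hX S1 (by simp)
  have hS2 : S2.IsReflection := hX S2 (by simp)
  have hU1 : U1.IsReflection := hY U1 (by simp)
  have hU2 : U2.IsReflection := hY U2 (by simp)
  have hleft (A : Matrix (Fin nx) (Fin nx) ℂ) (hA : A.IsReflection) :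
      (A ⊗ₖ (1 : Matrix (Fin ny) (Fin ny) ℂ)).IsReflection := hA.kronecker isReflection_one
  have hright (B : Matrix (Fin ny) (Fin ny) ℂ) (hB : B.IsReflection) :
      ((1 : Matrix (Fin nx) (Fin nx) ℂ) ⊗ₖ B).IsReflection := isReflection_one.kronecker hB
  have hfactors (A : Matrix (Fin nx) (Fin nx) ℂ) (B : Matrix (Fin ny) (Fin ny) ℂ) :
      Commute (A ⊗ₖ 1) (1 ⊗ₖ B) := (Commute.one_right A).kronecker (Commute.one_left B)
  have hcomm := norm_commutator_le hρ (hleft R1 hR1).mem_unitary (hleft R2 hR2).mem_unitary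
    (hleft S1 hS1).mem_unitary (hleft S2 hS2).mem_unitary (hright U1 hU1).mem_unitary
    (hright U2 hU2).mem_unitary (hfactors R1 U2) (hfactors S1 U2).symm (hfactors S2 U1)
    (hfactors R2 U1).symm (Commute.kronecker hS (Commute.refl 1))
    (hR1U1.norm_sub_le hρ htr hR1 hU1) (hS1U1.norm_sub_le hρ htr hS1 hU1)
    (hR2U2.norm_sub_le hρ htr hR2 hU2) (hS2U2.norm_sub_le hρ htr hS2 hU2)
  have hsq := norm_commutator_sq_of_isReflection hρ htr (hleft R1 hR1) (hleft R2 hR2)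
  have habab : (R1 * R2 * R1 * R2) ⊗ₖ (1 : Matrix (Fin ny) (Fin ny) ℂ)
      = (R1 ⊗ₖ 1) * (R2 ⊗ₖ 1) * (R1 ⊗ₖ 1) * (R2 ⊗ₖ 1) := by
    simp only [← mul_kronecker_mul, mul_one]
  rw [habab, ← RCLike.re_to_complex]
  nlinarith [pow_le_pow_left₀ (norm_nonneg _) hcomm 2, Real.sq_sqrt hε]
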